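/- arXiv:2210.07081 — 2 statements merged into one kernel-verified Lean document; each statement's English description precedes it below -/
import Mathlib

section
/- Let G be a finite group acting on a set X. Suppose there do not exist subgroups G = G_0 > G_1 > ⋯ > G_D (strict inclusions) with X^{G_i} ⊊ X^{G_{i+1}} and [G_i : G_{i+1}] ≤ N for all i. Then there exists a subgroup G' ≤ G with [G : G'] ≤ N^D such that every subgroup H ≤ G' with X^{G'} ⊊ X^H satisfies [G' : H] > N. -/
/-!
Descend greedily from `G`: as long as the current subgroup `K` has a subgroup `H` of relative
index at most `N` with a strictly larger fixed set, pass to `H`. Each step multiplies the index by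
at most `N`, and the hypothesis forbids `D` such steps, so the descent stops after fewer than `D`
steps at a subgroup of index at most `N ^ D` with no such `H`.
-/

/-- The set of points of `X` fixed by every element of a subgroup `K`. -/
def fixSet {G : Type*} (X : Type*) [Group G] [MulAction G X] (K : Subgroup G) : Set X :=
  {x : X | ∀ g ∈ K, g • x = x}

namespace MulAction

variable {G : Type*} (X : Type*) [Group G] [MulAction G X] (N : ℕ)

def IsSmallJump (H K : Subgroup G) : Prop :=
  H ≤ K ∧ fixSet X K ⊂ fixSet X H ∧ H.relIndex K ≤ N

variable {X N}

theorem IsSmallJump.lt {H K : Subgroup G} (h : IsSmallJump X N H K) : H < K :=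
  h.1.lt_of_ne <| by rintro rfl; exact h.2.1.ne rfl

theorem index_le_pow_of_isSmallJump {c : ℕ → Subgroup G} (h0 : c 0 = ⊤) {n : ℕ}
    (hc : ∀ i < n, IsSmallJump X N (c (i + 1)) (c i)) : (c n).index ≤ N ^ n := by
  induction n with
  | zero => simp [h0]
  | succ n ih =>
    obtain ⟨hle, -, hrel⟩ := hc n n.lt_succ_self
    calc (c (n + 1)).index = (c (n + 1)).relIndex (c n) * (c n).index :=
          (Subgroup.relIndex_mul_index hle).symm
      _ ≤ N * N ^ n := Nat.mul_le_mul hrel (ih fun i hi => hc i (hi.trans n.lt_succ_self))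
      _ = N ^ (n + 1) := (pow_succ' N n).symm

theorem exists_isSmallJump_chain_or_exists_index_le_pow (hN : 1 ≤ N) (n : ℕ) :
    (∃ c : ℕ → Subgroup G, c 0 = ⊤ ∧ ∀ i < n, IsSmallJump X N (c (i + 1)) (c i)) ∨
      ∃ K : Subgroup G, K.index ≤ N ^ n ∧ ∀ H, ¬ IsSmallJump X N H K := by
  induction n with
  | zero => exact .inl ⟨fun _ => ⊤, rfl, fun i hi => absurd hi i.not_lt_zero⟩
  | succ n ih =>
    have hpow : N ^ n ≤ N ^ (n + 1) := Nat.pow_le_pow_right hN n.le_succ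
    rcases ih with ⟨c, h0, hc⟩ | ⟨K, hK, hstuck⟩
    · by_cases hjump : ∃ H, IsSmallJump X N H (c n)
      · obtain ⟨H, hH⟩ := hjump
        refine .inl ⟨fun i => if i ≤ n then c i else H, by simpa using h0, fun i hi => ?_⟩
        rcases Nat.lt_succ_iff_lt_or_eq.mp hi with hi | rfl
        · simpa [hi.le, Nat.succ_le_of_lt hi] using hc i hi
        · simpa using hH
      · exact .inr ⟨c n, (index_le_pow_of_isSmallJump h0 hc).trans hpow, not_exists.mp hjump⟩
    · exact .inr ⟨K, hK.trans hpow, hstuck⟩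

end MulAction

theorem exists_subgroup_no_small_index_fixed_set_jump_general
    {G X : Type*} [Group G] [MulAction G X] (N D : ℕ)
    (hN : 1 ≤ N)
    (hnochain : ¬ ∃ c : Fin (D + 1) → Subgroup G, c 0 = ⊤ ∧
      (∀ i : Fin D, c i.succ < c i.castSucc) ∧
      (∀ i : Fin D, fixSet X (c i.castSucc) ⊂ fixSet X (c i.succ)) ∧
      (∀ i : Fin D, (c i.succ).relIndex (c i.castSucc) ≤ N)) :
    ∃ G' : Subgroup G, G'.index ≤ N ^ D ∧
      ∀ H : Subgroup G, H ≤ G' → fixSet X G' ⊂ fixSet X H → N < H.relIndex G' := by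
  rcases MulAction.exists_isSmallJump_chain_or_exists_index_le_pow (G := G) (X := X) hN D with
    ⟨c, h0, hc⟩ | ⟨K, hK, hstuck⟩
  · refine absurd ⟨fun i => c i, h0, fun i => ?_, fun i => ?_, fun i => ?_⟩ hnochain
    · simpa using (hc i i.isLt).lt
    · simpa using (hc i i.isLt).2.1
    · simpa using (hc i i.isLt).2.2
  · exact ⟨K, hK, fun H hle hss => not_le.mp fun hrel => hstuck H ⟨hle, hss, hrel⟩⟩

theorem exists_subgroup_no_small_index_fixed_set_jump
    {G X : Type*} [Group G] [Finite G] [MulAction G X] (N D : ℕ)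
    (hN : 1 ≤ N) (hD : 1 ≤ D)
    (hnochain : ¬ ∃ c : Fin (D + 1) → Subgroup G, c 0 = ⊤ ∧
      (∀ i : Fin D, c i.succ < c i.castSucc) ∧
      (∀ i : Fin D, fixSet X (c i.castSucc) ⊂ fixSet X (c i.succ)) ∧
      (∀ i : Fin D, (c i.succ).relIndex (c i.castSucc) ≤ N)) :
    ∃ G' : Subgroup G, G'.index ≤ N ^ D ∧
      ∀ H : Subgroup G, H ≤ G' → fixSet X G' ⊂ fixSet X H → N < H.relIndex G' :=
  exists_subgroup_no_small_index_fixed_set_jump_general N D hN hnochain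
end

section
/- Every finite abelian subgroup A of GL(n, ℝ) of odd order can be generated by ⌊n/2⌋ or fewer elements. -/
open Subgroup Function

/-- A finite group embedding into `Fin m → ℂˣ` is generated by at most `m` elements. -/
lemma aux_gen : ∀ (m : ℕ) (G : Type) [Group G] [Finite G] (f : G →* (Fin m → ℂˣ)),
    Function.Injective f → ∃ S : Finset G, S.card ≤ m ∧ Subgroup.closure (S : Set G) = ⊤ := by
  intro m
  induction m with
  | zero =>
    intro G _ _ f hf
    refine ⟨∅, by simp, ?_⟩
    have h1 : ∀ a : G, a = 1 := fun a => hf (by funext i; exact i.elim0)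
    rw [eq_top_iff]
    intro a _
    rw [h1 a]
    exact one_mem _
  | succ m ih =>
    intro G _ _ f hf
    classical
    set g : G →* ℂˣ := (Pi.evalMonoidHom (fun _ : Fin (m+1) => ℂˣ) (Fin.last m)).comp f with hg
    set K := g.ker with hK
    let f' : K →* (Fin m → ℂˣ) :=
      { toFun := fun k i => f k (Fin.castSucc i)
        map_one' := by funext i; simp
        map_mul' := by intro a b; funext i; simp }
    have hf' : Function.Injective f' := by
      intro a b hab
      have hfab : f (a : G) = f (b : G) := by
        funext i
        induction i using Fin.lastCases with
        | last =>
          have ha : g (a : G) = 1 := a.2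
          have hb : g (b : G) = 1 := b.2
          simp only [hg, MonoidHom.comp_apply, Pi.evalMonoidHom_apply] at ha hb
          rw [ha, hb]
        | cast j => exact congrFun hab j
      exact Subtype.ext (hf hfab)
    obtain ⟨S', hS'card, hS'top⟩ := ih K f' hf'
    -- the range of g is cyclic
    haveI : Finite g.range := Set.Finite.to_subtype (Set.finite_range g)
    obtain ⟨⟨y, hy⟩, hgen⟩ := IsCyclic.exists_generator (α := g.range)
    obtain ⟨x, hx⟩ := hy
    have hzpow : ∀ a : G, ∃ k : ℤ, g a = g x ^ k := by
      intro a
      obtain ⟨k, hk⟩ := hgen ⟨g a, ⟨a, rfl⟩⟩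
      refine ⟨k, ?_⟩
      have := congrArg Subtype.val hk
      simp only at this
      rw [← this, hx]
      rfl
    refine ⟨insert x (S'.image K.subtype), ?_, ?_⟩
    · calc (insert x (S'.image K.subtype)).card ≤ (S'.image K.subtype).card + 1 :=
            Finset.card_insert_le _ _
        _ ≤ S'.card + 1 := by gcongr; exact Finset.card_image_le
        _ ≤ m + 1 := by omega
    · have hKle : (K : Subgroup G) ≤ Subgroup.closure (↑(insert x (S'.image K.subtype)) : Set G) := by
        have h1 : Subgroup.closure ((S'.image K.subtype : Finset G) : Set G) = K := by
          rw [Finset.coe_image, ← MonoidHom.map_closure, hS'top, ← MonoidHom.range_eq_map,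
            Subgroup.range_subtype]
        refine (le_of_eq h1.symm).trans (Subgroup.closure_mono ?_)
        intro z hz
        simp only [Finset.coe_insert, Set.mem_insert_iff]
        exact Or.inr hz
      rw [eq_top_iff]
      intro a _
      obtain ⟨k, hk⟩ := hzpow a
      have hmem : a * (x ^ k)⁻¹ ∈ K := by
        rw [hK, MonoidHom.mem_ker, map_mul, map_inv, map_zpow, hk]
        group
      have hx' : x ∈ Subgroup.closure (↑(insert x (S'.image K.subtype)) : Set G) :=
        Subgroup.subset_closure (by simp)
      have := mul_mem (hKle hmem) (zpow_mem hx' k)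
      simpa using this

/-- Version of `aux_gen` with an arbitrary finite index type. -/
lemma aux_gen' (G : Type) [Group G] [Finite G] (ι : Type) [Fintype ι] (f : G →* (ι → ℂˣ))
    (hf : Function.Injective f) :
    ∃ S : Finset G, S.card ≤ Fintype.card ι ∧ Subgroup.closure (S : Set G) = ⊤ := by
  let e := Fintype.equivFin ι
  let f2 : G →* (Fin (Fintype.card ι) → ℂˣ) :=
    { toFun := fun a i => f a (e.symm i)
      map_one' := by funext i; simp
      map_mul' := by intro a b; funext i; simp }
  have hf2 : Function.Injective f2 := by
    intro a b hab
    apply hf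
    funext j
    have := congrFun hab (e j)
    simpa [f2] using this
  exact aux_gen (Fintype.card ι) G f2 hf2

/-- Selecting representatives from pairs under a fixed-point-free involution. -/
lemma pair_select {α : Type*} [DecidableEq α] (σ : α → α) (hσ : ∀ x, σ (σ x) = x) :
    ∀ (T : Finset α), (∀ x ∈ T, σ x ∈ T) → (∀ x ∈ T, σ x ≠ x) →
    ∃ R ⊆ T, 2 * R.card ≤ T.card ∧ ∀ x ∈ T, x ∈ R ∨ σ x ∈ R := by
  intro T
  induction T using Finset.strongInduction with
  | _ T ih =>
    intro hclosed hfree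
    rcases T.eq_empty_or_nonempty with rfl | ⟨x, hx⟩
    · exact ⟨∅, by simp⟩
    · have hσx : σ x ∈ T := hclosed x hx
      have hne : σ x ≠ x := hfree x hx
      set T' := (T.erase x).erase (σ x) with hT'
      have hT'sub : T' ⊂ T := by
        refine Finset.ssubset_of_subset_of_ssubset (Finset.erase_subset _ _)
          (Finset.erase_ssubset hx)
      have hT'mem : ∀ y, y ∈ T' ↔ y ∈ T ∧ y ≠ x ∧ y ≠ σ x := by
        intro y
        simp only [hT', Finset.mem_erase]
        tauto
      obtain ⟨R', hR'sub, hR'card, hR'cov⟩ := ih T' hT'sub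
        (by
          intro y hy
          rw [hT'mem] at hy ⊢
          obtain ⟨hyT, hyx, hyσx⟩ := hy
          refine ⟨hclosed y hyT, ?_, ?_⟩
          · intro h
            have h' := congrArg σ h
            rw [hσ] at h'
            exact hyσx h'
          · intro h
            have h' := congrArg σ h
            rw [hσ, hσ] at h'
            exact hyx h')
        (by
          intro y hy
          rw [hT'mem] at hy
          exact hfree y hy.1)
      refine ⟨insert x R', ?_, ?_, ?_⟩
      · intro z hz
        rcases Finset.mem_insert.mp hz with rfl | hz
        · exact hx
        · exact (Finset.erase_subset _ _) ((Finset.erase_subset _ _) (hR'sub hz))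
      · have hcard : T'.card + 2 ≤ T.card := by
          have h3 : (T.erase x).card = T.card - 1 := Finset.card_erase_of_mem hx
          have h4 : T'.card = (T.erase x).card - 1 :=
            Finset.card_erase_of_mem (Finset.mem_erase.mpr ⟨hne, hσx⟩)
          have h1 : 1 ≤ (T.erase x).card :=
            Finset.card_pos.mpr ⟨σ x, Finset.mem_erase.mpr ⟨hne, hσx⟩⟩
          have h2 : 1 ≤ T.card := Finset.card_pos.mpr ⟨x, hx⟩
          omega
        calc 2 * (insert x R').card ≤ 2 * (R'.card + 1) := by
              gcongr; exact Finset.card_insert_le _ _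
          _ = 2 * R'.card + 2 := by ring
          _ ≤ T'.card + 2 := by omega
          _ ≤ T.card := hcard
      · intro y hy
        by_cases h1 : y = x
        · exact Or.inl (Finset.mem_insert.mpr (Or.inl h1))
        · by_cases h2 : y = σ x
          · refine Or.inr (Finset.mem_insert.mpr (Or.inl ?_))
            rw [h2, hσ]
          · have : y ∈ T' := (hT'mem y).mpr ⟨hy, h1, h2⟩
            rcases hR'cov y this with h | h
            · exact Or.inl (Finset.mem_insert.mpr (Or.inr h))
            · exact Or.inr (Finset.mem_insert.mpr (Or.inr h))

open Module Module.End

/-- Key lemma: a finite group of odd order acting faithfully on `ℂⁿ`, commutatively and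
compatibly with complex conjugation, is generated by at most `n/2` elements. -/
lemma key_lemma (n : ℕ) (G : Type) [Group G] [Finite G] (hodd : Odd (Nat.card G))
    (ρ : G →* Module.End ℂ (Fin n → ℂ)) (hinj : Function.Injective ρ)
    (hcm : ∀ a b : G, Commute (ρ a) (ρ b))
    (hstar : ∀ (a : G) (v : Fin n → ℂ),
      ρ a (fun i => starRingEnd ℂ (v i)) = fun i => starRingEnd ℂ (ρ a v i)) :
    ∃ S : Finset G, S.card ≤ n / 2 ∧ Subgroup.closure (S : Set G) = ⊤ := by
  classical
  set N := Nat.card G with hNdef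
  have hN0 : N ≠ 0 := Nat.card_pos.ne'
  have hρN : ∀ a : G, ρ a ^ N = 1 := by
    intro a
    rw [← map_pow, pow_card_eq_one', map_one]
  -- semisimplicity
  have hsemi : ∀ a : G, (ρ a).IsFinitelySemisimple := by
    intro a
    have hsq : Squarefree (Polynomial.X ^ N - Polynomial.C (1 : ℂ)) :=
      (Polynomial.separable_X_pow_sub_C 1 (Nat.cast_ne_zero.mpr hN0) one_ne_zero).squarefree
    have haev : Polynomial.aeval (ρ a) (Polynomial.X ^ N - Polynomial.C (1 : ℂ)) = 0 := by
      rw [map_sub, map_pow, Polynomial.aeval_X, Polynomial.aeval_C, hρN]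
      simp
    exact (isSemisimple_of_squarefree_aeval_eq_zero hsq haev).isFinitelySemisimple
  have hEig : ∀ (a : G) (μ : ℂ), (ρ a).maxGenEigenspace μ = (ρ a).eigenspace μ :=
    fun a μ => (hsemi a).maxGenEigenspace_eq_eigenspace μ
  set W : (G → ℂ) → Submodule ℂ (Fin n → ℂ) := fun χ => ⨅ a, (ρ a).eigenspace (χ a) with hWdef
  have htop : ⨆ χ : G → ℂ, W χ = ⊤ := by
    have h := iSup_iInf_maxGenEigenspace_eq_top_of_iSup_maxGenEigenspace_eq_top_of_commute
      (fun a : G => ρ a) (fun a b _ => hcm a b)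
      (fun a => iSup_maxGenEigenspace_eq_top (ρ a))
    simpa only [hEig] using h
  have hindep : iSupIndep W := by
    have h := independent_iInf_maxGenEigenspace_of_forall_mapsTo (fun a : G => ρ a)
      (fun i j φ => mapsTo_maxGenEigenspace_of_comm (hcm j i) φ)
    simpa only [hEig] using h
  -- finiteness of the set of occurring characters
  have hfinset : {χ : G → ℂ | W χ ≠ ⊥}.Finite := by
    rw [← Set.finite_coe_iff]
    have hc := hindep.subtype_ne_bot_le_finrank_aux
    have hlt : Cardinal.mk {χ : G → ℂ // W χ ≠ ⊥} < Cardinal.aleph0 :=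
      hc.trans_lt (Cardinal.nat_lt_aleph0 _)
    exact Cardinal.lt_aleph0_iff_finite.mp hlt
  haveI hFT : Fintype {χ : G → ℂ // W χ ≠ ⊥} := hfinset.fintype
  have hT0n : Fintype.card {χ : G → ℂ // W χ ≠ ⊥} ≤ n := by
    have h := hindep.subtype_ne_bot_le_finrank
    rwa [finrank_fintype_fun_eq_card, Fintype.card_fin] at h
  -- witness vectors
  have hW : ∀ χ : G → ℂ, W χ ≠ ⊥ → ∃ v : Fin n → ℂ, v ≠ 0 ∧ ∀ a, ρ a v = χ a • v := by
    intro χ h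
    obtain ⟨v, hv, hv0⟩ := (Submodule.ne_bot_iff _).mp h
    refine ⟨v, hv0, fun a => ?_⟩
    have hm : v ∈ (ρ a).eigenspace (χ a) := by
      rw [hWdef] at hv
      exact (Submodule.mem_iInf _).mp hv a
    rwa [mem_eigenspace_iff] at hm
  have hmulχ : ∀ χ : G → ℂ, W χ ≠ ⊥ → ∀ a b, χ (a * b) = χ a * χ b := by
    intro χ h a b
    obtain ⟨v, hv0, hv⟩ := hW χ h
    refine smul_left_injective ℂ hv0 ?_
    show χ (a * b) • v = (χ a * χ b) • v
    rw [← hv (a * b), map_mul, Module.End.mul_apply, hv b, map_smul, hv a, smul_smul, mul_comm]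
  have honeχ : ∀ χ : G → ℂ, W χ ≠ ⊥ → χ 1 = 1 := by
    intro χ h
    obtain ⟨v, hv0, hv⟩ := hW χ h
    refine smul_left_injective ℂ hv0 ?_
    show χ 1 • v = (1 : ℂ) • v
    rw [← hv 1, map_one, one_smul, Module.End.one_apply]
  have hpowχ : ∀ χ : G → ℂ, W χ ≠ ⊥ → ∀ (a : G) (k : ℕ), χ (a ^ k) = χ a ^ k := by
    intro χ h a k
    induction k with
    | zero => simpa using honeχ χ h
    | succ k ih => rw [pow_succ, hmulχ χ h, ih, pow_succ]
  have hrootχ : ∀ χ : G → ℂ, W χ ≠ ⊥ → ∀ a, χ a ^ N = 1 := by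
    intro χ h a
    rw [← hpowχ χ h a N, pow_card_eq_one', honeχ χ h]
  have hneχ : ∀ χ : G → ℂ, W χ ≠ ⊥ → ∀ a, χ a ≠ 0 := by
    intro χ h a h0
    have := hrootχ χ h a
    rw [h0] at this
    simp [zero_pow hN0] at this
  -- conjugation
  have hconj : ∀ χ : G → ℂ, W χ ≠ ⊥ → W (fun a => starRingEnd ℂ (χ a)) ≠ ⊥ := by
    intro χ h
    obtain ⟨v, hv0, hv⟩ := hW χ h
    set w : Fin n → ℂ := fun i => starRingEnd ℂ (v i) with hwdef
    have hw0 : w ≠ 0 := by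
      intro h0
      apply hv0
      funext i
      have := congrFun h0 i
      simpa [hwdef] using this
    rw [Submodule.ne_bot_iff]
    refine ⟨w, ?_, hw0⟩
    rw [hWdef]
    rw [Submodule.mem_iInf]
    intro a
    rw [mem_eigenspace_iff]
    have hcalc : ρ a w = fun i => starRingEnd ℂ (ρ a v i) := hstar a v
    funext i
    rw [congrFun hcalc i, congrFun (hv a) i]
    simp [hwdef, map_mul]
  -- real characters are trivial
  have hreal : ∀ χ : G → ℂ, W χ ≠ ⊥ → (∀ a, starRingEnd ℂ (χ a) = χ a) → ∀ a, χ a = 1 := by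
    intro χ h hc a
    have h1 : χ a ^ N = 1 := hrootχ χ h a
    have h2 : (χ a).im = 0 := Complex.conj_eq_iff_im.mp (hc a)
    have h3 : χ a = ((χ a).re : ℂ) := by
      rw [← Complex.re_add_im (χ a), h2]
      simp
    have h5 : (χ a).re ^ N = 1 := by
      have h4 : (((χ a).re : ℂ)) ^ N = 1 := by rw [← h3]; exact h1
      exact_mod_cast h4
    have h6 : (χ a).re = 1 := by
      have := (Odd.strictMono_pow (R := ℝ) hodd).injective (a₁ := (χ a).re) (a₂ := 1)
      simpa [h5] using this
    rw [h3, h6, Complex.ofReal_one]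
  -- faithfulness
  have hfaithful : ∀ c : G, (∀ χ : G → ℂ, W χ ≠ ⊥ → χ c = 1) → c = 1 := by
    intro c hχ1
    have hle : ∀ χ : G → ℂ, W χ ≤ (ρ c).eigenspace 1 := by
      intro χ
      by_cases h : W χ = ⊥
      · rw [h]; exact bot_le
      · have h2 : W χ ≤ (ρ c).eigenspace (χ c) := by rw [hWdef]; exact iInf_le _ c
        rwa [hχ1 χ h] at h2
    have htop' : (ρ c).eigenspace 1 = ⊤ := by
      rw [eq_top_iff, ← htop]
      exact iSup_le hle
    have hid : ρ c = 1 := by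
      apply LinearMap.ext
      intro v
      have hv : v ∈ (ρ c).eigenspace 1 := htop' ▸ Submodule.mem_top
      rw [mem_eigenspace_iff] at hv
      simpa using hv
    apply hinj
    rw [hid, map_one]
  -- choose representatives
  set T0 : Finset (G → ℂ) := hfinset.toFinset with hT0def
  set triv : G → ℂ := fun _ => 1 with htrivdef
  set T : Finset (G → ℂ) := T0.filter (fun χ => χ ≠ triv) with hTdef
  set σ : (G → ℂ) → (G → ℂ) := fun χ => fun a => starRingEnd ℂ (χ a) with hσdef
  have hσinv : ∀ χ, σ (σ χ) = χ := by
    intro χ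
    funext a
    simp [hσdef]
  have hmemT0 : ∀ χ, χ ∈ T0 ↔ W χ ≠ ⊥ := by
    intro χ
    rw [hT0def, Set.Finite.mem_toFinset]
    rfl
  have hσT : ∀ χ ∈ T, σ χ ∈ T := by
    intro χ hχ
    rw [hTdef, Finset.mem_filter] at hχ ⊢
    obtain ⟨h1, h2⟩ := hχ
    refine ⟨(hmemT0 _).mpr (hconj χ ((hmemT0 _).mp h1)), ?_⟩
    intro h3
    apply h2
    funext a
    have := congrFun h3 a
    simp only [hσdef, htrivdef] at this ⊢
    have h4 := congrArg (starRingEnd ℂ) this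
    simpa using h4
  have hσfree : ∀ χ ∈ T, σ χ ≠ χ := by
    intro χ hχ h
    rw [hTdef, Finset.mem_filter] at hχ
    obtain ⟨h1, h2⟩ := hχ
    apply h2
    funext a
    exact hreal χ ((hmemT0 _).mp h1) (fun b => congrFun h b) a
  obtain ⟨R, hRsub, hRcard, hRcov⟩ := pair_select σ hσinv T hσT hσfree
  have hRocc : ∀ χ ∈ R, W χ ≠ ⊥ := by
    intro χ hχ
    have := hRsub hχ
    rw [hTdef, Finset.mem_filter] at this
    exact (hmemT0 _).mp this.1
  have hRn : R.card ≤ n / 2 := by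
    have h1 : T.card ≤ T0.card := by rw [hTdef]; exact Finset.card_filter_le _ _
    have h2 : T0.card ≤ n := by
      have hcc : hfinset.toFinset.card = Fintype.card {χ : G → ℂ // W χ ≠ ⊥} :=
        @Set.Finite.card_toFinset _ _ hFT hfinset
      rw [hT0def, hcc]
      exact hT0n
    rw [Nat.le_div_iff_mul_le (by norm_num)]
    omega
  -- the embedding
  let Φ : G →* ({χ // χ ∈ R} → ℂˣ) :=
    { toFun := fun a χ => Units.mk0 (χ.1 a) (hneχ χ.1 (hRocc χ.1 χ.2) a)
      map_one' := by
        funext χ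
        apply Units.ext
        simpa using honeχ χ.1 (hRocc χ.1 χ.2)
      map_mul' := by
        intro a b
        funext χ
        apply Units.ext
        simpa using hmulχ χ.1 (hRocc χ.1 χ.2) a b }
  have hΦinj : Function.Injective Φ := by
    intro a b hab
    have key : ∀ χ : G → ℂ, W χ ≠ ⊥ → χ a = χ b := by
      intro χ hχ
      by_cases htriv : χ = triv
      · rw [htriv]
      · have hχT : χ ∈ T := by
          rw [hTdef, Finset.mem_filter]
          exact ⟨(hmemT0 _).mpr hχ, htriv⟩
        rcases hRcov χ hχT with hR | hR
        · have h1 := congrFun hab ⟨χ, hR⟩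
          exact congrArg Units.val h1
        · have h1 := congrFun hab ⟨σ χ, hR⟩
          have h2 : σ χ a = σ χ b := congrArg Units.val h1
          simp only [hσdef] at h2
          have h3 := congrArg (starRingEnd ℂ) h2
          simpa using h3
    have h1 : a * b⁻¹ = 1 := by
      apply hfaithful
      intro χ hχ
      have hmu : χ b * χ b⁻¹ = 1 := by
        rw [← hmulχ χ hχ b b⁻¹, mul_inv_cancel, honeχ χ hχ]
      have hinv2 : χ b⁻¹ = (χ b)⁻¹ := eq_inv_of_mul_eq_one_right hmu
      rw [hmulχ χ hχ a b⁻¹, hinv2, key χ hχ, mul_inv_cancel₀ (hneχ χ hχ b)]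
    exact mul_inv_eq_one.mp h1
  obtain ⟨S, hScard, hStop⟩ := aux_gen' G {χ // χ ∈ R} Φ hΦinj
  refine ⟨S, ?_, hStop⟩
  rw [Fintype.card_coe] at hScard
  omega

theorem abelian_odd_subgroup_GL_rank_le
    (n : ℕ) (A : Subgroup (GL (Fin n) ℝ)) [Finite A]
    (hcomm : ∀ a ∈ A, ∀ b ∈ A, a * b = b * a)
    (hodd : Odd (Nat.card A)) :
    ∃ S : Finset ↥A, S.card ≤ n / 2 ∧ Subgroup.closure (S : Set ↥A) = ⊤ := by
  classical
  let Mx : ↥A → Matrix (Fin n) (Fin n) ℂ := fun a =>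
    ((a : GL (Fin n) ℝ) : Matrix (Fin n) (Fin n) ℝ).map (algebraMap ℝ ℂ)
  have hMxmul : ∀ a b : ↥A, Mx (a * b) = Mx a * Mx b := by
    intro a b
    show (((a * b : ↥A) : GL (Fin n) ℝ) : Matrix (Fin n) (Fin n) ℝ).map _ = _
    rw [Subgroup.coe_mul, Units.val_mul, Matrix.map_mul]
  have hMxone : Mx (1 : ↥A) = 1 := by
    show (((1 : ↥A) : GL (Fin n) ℝ) : Matrix (Fin n) (Fin n) ℝ).map _ = 1
    rw [OneMemClass.coe_one, Units.val_one, Matrix.map_one _ (map_zero _) (map_one _)]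
  let ρ : ↥A →* Module.End ℂ (Fin n → ℂ) :=
    { toFun := fun a => (Mx a).mulVecLin
      map_one' := by show (Mx 1).mulVecLin = 1; rw [hMxone, Matrix.mulVecLin_one]; rfl
      map_mul' := by intro a b; show (Mx (a * b)).mulVecLin = (Mx a).mulVecLin * (Mx b).mulVecLin; rw [hMxmul, Matrix.mulVecLin_mul]; rfl }
  have hρapp : ∀ (a : ↥A) (v : Fin n → ℂ), ρ a v = (Mx a).mulVec v := fun a v => rfl
  have hinj : Function.Injective ρ := by
    intro a b hab
    have hMxeq : ∀ i j, Mx a i j = Mx b i j := by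
      intro i j
      have h1 := congrArg (fun f : Module.End ℂ (Fin n → ℂ) => f (Pi.single j 1) i) hab
      simpa [hρapp, Matrix.mulVec_single, mul_one] using h1
    have hent : ∀ i j, ((a : GL (Fin n) ℝ) : Matrix (Fin n) (Fin n) ℝ) i j
        = ((b : GL (Fin n) ℝ) : Matrix (Fin n) (Fin n) ℝ) i j := by
      intro i j
      have h2 := hMxeq i j
      simp only [Mx, Matrix.map_apply] at h2
      exact_mod_cast h2
    have hGL : (a : GL (Fin n) ℝ) = (b : GL (Fin n) ℝ) := by
      apply Units.ext
      apply Matrix.ext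
      intro i j
      exact hent i j
    exact Subtype.ext hGL
  have hcm : ∀ a b : ↥A, Commute (ρ a) (ρ b) := by
    intro a b
    have h : a * b = b * a := Subtype.ext (hcomm ↑a a.2 ↑b b.2)
    show ρ a * ρ b = ρ b * ρ a
    rw [← map_mul, ← map_mul, h]
  have hstar : ∀ (a : ↥A) (v : Fin n → ℂ),
      ρ a (fun i => starRingEnd ℂ (v i)) = fun i => starRingEnd ℂ (ρ a v i) := by
    intro a v
    funext i
    rw [hρapp, hρapp]
    show ((Mx a).mulVec fun i => starRingEnd ℂ (v i)) i = starRingEnd ℂ ((Mx a).mulVec v i)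
    simp only [Matrix.mulVec, dotProduct, map_sum, map_mul]
    refine Finset.sum_congr rfl ?_
    intro j _
    congr 1
    simp [Mx, Matrix.map_apply, Complex.conj_ofReal]
  exact key_lemma n ↥A hodd ρ hinj hcm hstar
end
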